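/- arXiv:1006.5128 — 2 statements merged into one kernel-verified Lean document; each statement's English description precedes it below -/
import Mathlib

section
/- In a strongly Gelfand quantale, if f and g are functional elements (f*·f ≤ e and g*·g ≤ e) with f ≤ g, then f = g if and only if f·f* = g·g*. -/
/-- A unital involutive quantale: a complete lattice with a monoid structure whose
multiplication distributes over arbitrary joins in each coordinate, and an
involution `star` satisfying `(a*b)* = b* * a*`, `a** = a`, preserving joins.
The multiplicative unit `1` plays the role of `e`. -/
class UIQuantale (Q : Type*) extends CompleteLattice Q, Monoid Q, StarMul Q where
  mul_sSup : ∀ (a : Q) (s : Set Q), a * sSup s = ⨆ b ∈ s, a * b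
  sSup_mul : ∀ (a : Q) (s : Set Q), sSup s * a = ⨆ b ∈ s, b * a
  star_sSup : ∀ (s : Set Q), star (sSup s) = ⨆ b ∈ s, star b


lemma UIQuantale.mul_le_mul_left' {Q : Type*} [UIQuantale Q] {a b : Q} (h : a ≤ b) (c : Q) :
    c * a ≤ c * b := by
  have : c * (a ⊔ b) = (c * a) ⊔ (c * b) := by
    have := UIQuantale.mul_sSup c {a, b}
    simpa [iSup_or, iSup_sup_eq, sSup_pair] using this.trans (by rw [iSup_pair])
  have hb : a ⊔ b = b := sup_eq_right.mpr h
  calc c * a ≤ c * a ⊔ c * b := le_sup_left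
    _ = c * (a ⊔ b) := this.symm
    _ = c * b := by rw [hb]

lemma UIQuantale.mul_le_mul_right' {Q : Type*} [UIQuantale Q] {a b : Q} (h : a ≤ b) (c : Q) :
    a * c ≤ b * c := by
  have : (a ⊔ b) * c = (a * c) ⊔ (b * c) := by
    have := UIQuantale.sSup_mul c {a, b}
    simpa [iSup_or, iSup_sup_eq, sSup_pair] using this.trans (by rw [iSup_pair])
  have hb : a ⊔ b = b := sup_eq_right.mpr h
  calc a * c ≤ a * c ⊔ b * c := le_sup_left
    _ = (a ⊔ b) * c := this.symm
    _ = b * c := by rw [hb]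

lemma UIQuantale.star_mono {Q : Type*} [UIQuantale Q] {a b : Q} (h : a ≤ b) :
    star a ≤ star b := by
  have : star (a ⊔ b) = star a ⊔ star b := by
    have := UIQuantale.star_sSup (Q := Q) {a, b}
    simpa [iSup_or, iSup_sup_eq, sSup_pair] using this.trans (by rw [iSup_pair])
  have hb : a ⊔ b = b := sup_eq_right.mpr h
  calc star a ≤ star a ⊔ star b := le_sup_left
    _ = star (a ⊔ b) := this.symm
    _ = star b := by rw [hb]

theorem stmt1 (Q : Type*) [UIQuantale Q] (sg : ∀ a : Q, a ≤ a * star a * a)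
    (f g : Q) (hf : star f * f ≤ 1) (hg : star g * g ≤ 1) (hfg : f ≤ g) :
    f = g ↔ f * star f = g * star g := by
  constructor
  · rintro rfl; rfl
  · intro h
    refine le_antisymm hfg ?_
    have h1 : g ≤ f * star f * g := by
      calc g ≤ g * star g * g := sg g
        _ = f * star f * g := by rw [← h]
    have h2 : star f * g ≤ 1 := by
      calc star f * g ≤ star g * g := UIQuantale.mul_le_mul_right' (UIQuantale.star_mono hfg) g
        _ ≤ 1 := hg
    calc g ≤ f * star f * g := h1
      _ = f * (star f * g) := mul_assoc _ _ _
      _ ≤ f * 1 := UIQuantale.mul_le_mul_left' h2 f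
      _ = f := mul_one f
end

section
/- In a strongly Gelfand quantale Q, the set I(Q) of partial units (elements f with f*·f ≤ e and f·f* ≤ e) forms an inverse monoid under the quantale multiplication, with unit e, whose set of idempotents is exactly Q_e = {c : c ≤ e}, and whose natural order coincides with the order inherited from Q. -/
/-- A partial unit: both  and  are functional. -/
def IsPU {Q : Type*} [UIQuantale Q] (f : Q) : Prop :=
  star f * f ≤ 1 ∧ f * star f ≤ 1

section Aux

variable {Q : Type*} [UIQuantale Q]

lemma qmul_le_left (a : Q) {b c : Q} (h : b ≤ c) : a * b ≤ a * c := by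
  have h1 : a * b ≤ ⨆ x ∈ ({b, c} : Set Q), a * x :=
    le_biSup (fun x => a * x) (Set.mem_insert _ _)
  have h2 : (⨆ x ∈ ({b, c} : Set Q), a * x) = a * sSup {b, c} :=
    (UIQuantale.mul_sSup a {b, c}).symm
  have h3 : sSup ({b, c} : Set Q) = c := by
    rw [sSup_pair, sup_eq_right.mpr h]
  rw [h2, h3] at h1
  exact h1

lemma qmul_le_right (a : Q) {b c : Q} (h : b ≤ c) : b * a ≤ c * a := by
  have h1 : b * a ≤ ⨆ x ∈ ({b, c} : Set Q), x * a :=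
    le_biSup (fun x => x * a) (Set.mem_insert _ _)
  have h2 : (⨆ x ∈ ({b, c} : Set Q), x * a) = sSup {b, c} * a :=
    (UIQuantale.sSup_mul a {b, c}).symm
  have h3 : sSup ({b, c} : Set Q) = c := by
    rw [sSup_pair, sup_eq_right.mpr h]
  rw [h2, h3] at h1
  exact h1

lemma qmul_le_mul {a b c d : Q} (h1 : a ≤ b) (h2 : c ≤ d) : a * c ≤ b * d :=
  le_trans (qmul_le_left a h2) (qmul_le_right d h1)

lemma qstar_mono {a b : Q} (h : a ≤ b) : star a ≤ star b := by
  have h1 : star a ≤ ⨆ x ∈ ({a, b} : Set Q), star x :=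
    le_biSup (fun x => star x) (Set.mem_insert _ _)
  have h2 : (⨆ x ∈ ({a, b} : Set Q), star x) = star (sSup {a, b}) :=
    (UIQuantale.star_sSup {a, b}).symm
  have h3 : sSup ({a, b} : Set Q) = b := by
    rw [sSup_pair, sup_eq_right.mpr h]
  rw [h2, h3] at h1
  exact h1

lemma isPU_star {f : Q} (hf : IsPU f) : IsPU (star f) := by
  constructor
  · rw [star_star]; exact hf.2
  · rw [star_star]; exact hf.1

lemma isPU_mul {f g : Q} (hf : IsPU f) (hg : IsPU g) : IsPU (f * g) := by
  constructor
  · have : star (f * g) * (f * g) = star g * (star f * f) * g := by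
      simp only [star_mul, mul_assoc]
    rw [this]
    calc star g * (star f * f) * g ≤ star g * 1 * g :=
          qmul_le_right g (qmul_le_left (star g) hf.1)
      _ = star g * g := by rw [mul_one]
      _ ≤ 1 := hg.1
  · have : (f * g) * star (f * g) = f * (g * star g) * star f := by
      simp only [star_mul, mul_assoc]
    rw [this]
    calc f * (g * star g) * star f ≤ f * 1 * star f :=
          qmul_le_right (star f) (qmul_le_left f hg.2)
      _ = f * star f := by rw [mul_one]
      _ ≤ 1 := hf.2

lemma pu_reg {Q : Type*} [UIQuantale Q] (sg : ∀ a : Q, a ≤ a * star a * a)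
    {f : Q} (hf : IsPU f) : f * star f * f = f := by
  apply le_antisymm
  · calc f * star f * f ≤ 1 * f := qmul_le_right f hf.2
      _ = f := one_mul f
  · exact sg f

lemma pu_star_le_one {Q : Type*} [UIQuantale Q] (sg : ∀ a : Q, a ≤ a * star a * a)
    {f : Q} (hf : IsPU f) (hidem : f * f = f) : star f ≤ 1 := by
  have h1 : star f ≤ star f * f * star f := by
    have := sg (star f); rwa [star_star] at this
  calc star f ≤ star f * f * star f := h1
    _ = star f * (f * f) * star f := by rw [hidem]
    _ = (star f * f) * (f * star f) := by simp only [mul_assoc]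
    _ ≤ 1 * 1 := qmul_le_mul hf.1 hf.2
    _ = 1 := one_mul 1

lemma pu_idem_iff {Q : Type*} [UIQuantale Q] (sg : ∀ a : Q, a ≤ a * star a * a)
    {f : Q} (hf : IsPU f) : f * f = f ↔ f ≤ 1 := by
  constructor
  · intro hidem
    have hs : star f * star f = star f := by rw [← star_mul, hidem]
    have := pu_star_le_one sg (isPU_star hf) hs
    rwa [star_star] at this
  · intro hle
    have hsle : star f ≤ 1 := by
      have := qstar_mono hle; rwa [star_one] at this
    apply le_antisymm
    · calc f * f ≤ 1 * f := qmul_le_right f hle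
        _ = f := one_mul f
    · calc f ≤ f * star f * f := sg f
        _ ≤ f * 1 * f := qmul_le_right f (qmul_le_left f hsle)
        _ = f * f := by rw [mul_one]

end Aux

/-- In a strongly Gelfand quantale, the partial units form an inverse monoid under
the quantale multiplication with unit  (closure under product, every element
has  as its unique inverse), whose idempotents are exactly Q_e, and whose
natural order coincides with the order inherited from Q. -/
theorem stmt2 (Q : Type*) [UIQuantale Q] (sg : ∀ a : Q, a ≤ a * star a * a) :
    IsPU (1 : Q) ∧
    (∀ f g : Q, IsPU f → IsPU g → IsPU (f * g)) ∧
    (∀ f : Q, IsPU f →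
      f * star f * f = f ∧ star f * f * star f = star f ∧
      ∀ g : Q, IsPU g → f * g * f = f → g * f * g = g → g = star f) ∧
    (∀ f : Q, IsPU f → (f * f = f ↔ f ≤ 1)) ∧
    (∀ f g : Q, IsPU f → IsPU g →
      (f ≤ g ↔ ∃ h : Q, IsPU h ∧ h * h = h ∧ f = g * h)) := by
  refine ⟨⟨by rw [star_one, one_mul], by rw [star_one, one_mul]⟩,
    fun f g hf hg => isPU_mul hf hg, ?_, fun f hf => pu_idem_iff sg hf, ?_⟩
  · intro f hf
    have hreg : f * star f * f = f := pu_reg sg hf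
    have hsreg : star f * f * star f = star f := by
      have := pu_reg sg (isPU_star hf); rwa [star_star] at this
    refine ⟨hreg, hsreg, ?_⟩
    intro g hg hfgf hgfg
    -- fg and gf are idempotent PUs, hence ≤ 1
    have hfg : IsPU (f * g) := isPU_mul hf hg
    have hgf : IsPU (g * f) := isPU_mul hg hf
    have hfg_idem : (f * g) * (f * g) = f * g := by
      calc (f * g) * (f * g) = (f * g * f) * g := by rw [mul_assoc, mul_assoc, mul_assoc]
        _ = f * g := by rw [hfgf]
    have hgf_idem : (g * f) * (g * f) = g * f := by
      calc (g * f) * (g * f) = (g * f * g) * f := by rw [mul_assoc, mul_assoc, mul_assoc]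
        _ = g * f := by rw [hgfg]
    have hfg1 : f * g ≤ 1 := (pu_idem_iff sg hfg).mp hfg_idem
    have hgf1 : g * f ≤ 1 := (pu_idem_iff sg hgf).mp hgf_idem
    apply le_antisymm
    · -- g = (g f) f* (f g) ≤ f*
      have he : g = (g * f) * star f * (f * g) := by
        conv_lhs => rw [← hgfg, ← hreg]
        simp only [mul_assoc]
      calc g = (g * f) * star f * (f * g) := he
        _ ≤ 1 * star f * 1 := qmul_le_mul (qmul_le_mul hgf1 le_rfl) hfg1
        _ = star f := by rw [one_mul, mul_one]
    · -- f* = (f* f) g (f f*) ≤ g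
      have he : star f = (star f * f) * g * (f * star f) := by
        calc star f = star f * f * star f := hsreg.symm
          _ = star f * (f * g * f) * star f := by rw [hfgf]
          _ = (star f * f) * g * (f * star f) := by simp only [mul_assoc]
      calc star f = (star f * f) * g * (f * star f) := he
        _ ≤ 1 * g * 1 := qmul_le_mul (qmul_le_mul hf.1 le_rfl) hf.2
        _ = g := by rw [one_mul, mul_one]
  · intro f g hf hg
    constructor
    · intro hle
      refine ⟨star g * f, ?_, ?_, ?_⟩
      · constructor
        · have : star (star g * f) * (star g * f) = star f * (g * star g) * f := by
            rw [star_mul, star_star, mul_assoc, mul_assoc, mul_assoc]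
          rw [this]
          calc star f * (g * star g) * f ≤ star f * 1 * f :=
                qmul_le_right f (qmul_le_left (star f) hg.2)
            _ = star f * f := by rw [mul_one]
            _ ≤ 1 := hf.1
        · have : (star g * f) * star (star g * f) = star g * (f * star f) * g := by
            rw [star_mul, star_star, mul_assoc, mul_assoc, mul_assoc]
          rw [this]
          calc star g * (f * star f) * g ≤ star g * 1 * g :=
                qmul_le_right g (qmul_le_left (star g) hf.2)
            _ = star g * g := by rw [mul_one]
            _ ≤ 1 := hg.1
      · have hpu : IsPU (star g * f) := isPU_mul (isPU_star hg) hf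
        apply (pu_idem_iff sg hpu).mpr
        calc star g * f ≤ star g * g := qmul_le_left (star g) hle
          _ ≤ 1 := hg.1
      · apply le_antisymm
        · calc f ≤ f * star f * f := sg f
            _ ≤ g * (star g * f) := by
                rw [← mul_assoc]
                exact qmul_le_right f (qmul_le_mul hle (qstar_mono hle))
        · calc g * (star g * f) = (g * star g) * f := by rw [mul_assoc]
            _ ≤ 1 * f := qmul_le_right f hg.2
            _ = f := one_mul f
    · rintro ⟨h, hh, hidem, rfl⟩
      have h1 : h ≤ 1 := (pu_idem_iff sg hh).mp hidem
      calc g * h ≤ g * 1 := qmul_le_left g h1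
        _ = g := mul_one g
end
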